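/- arXiv:2206.13174 — 11 statements merged into one kernel-verified Lean document; each statement's English description precedes it below -/
import Mathlib

section
/- Let μ = 1 and assume p m ≠ 0 for every m ∈ M (the model assumption). For every formula A ⊆ M and every finite set Δ of formulas with ⟦Δ⟧ ≠ ∅, the conditional probability satisfies P₁(A | Δ) = (∑_{m ∈ ⟦Δ⟧ ∩ A} p m) / (∑_{m ∈ ⟦Δ⟧} p m). -/
open Classical

noncomputable section

variable {M : Type*}

/-- Likelihood of a formula (a set of models) in a model. -/
noncomputable def ell (μ : ℝ) (B : Set M) (m : M) : ℝ :=
  if m ∈ B then μ else 1 - μ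

/-- Joint likelihood of a finite set of formulas in a model. -/
noncomputable def ellS (μ : ℝ) (Δ : Finset (Set M)) (m : M) : ℝ :=
  ∏ B ∈ Δ, ell μ B m

/-- Conditional probability P_μ(A | Δ) of the generative logic model. -/
noncomputable def condP [Fintype M] (p : M → ℝ) (μ : ℝ) (A : Set M)
    (Δ : Finset (Set M)) : ℝ :=
  (∑ m, ell μ A m * ellS μ Δ m * p m) / (∑ m, ellS μ Δ m * p m)

/-- Models of a finite set of formulas. -/
def Mdl (Δ : Finset (Set M)) : Set M := {m | ∀ B ∈ Δ, m ∈ B}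

/-- Possible models of a finite set of formulas. -/
def PMod (p : M → ℝ) (Δ : Finset (Set M)) : Set M :=
  {m | (∀ B ∈ Δ, m ∈ B) ∧ p m ≠ 0}

/-- Possible models of a single formula. -/
def PModA (p : M → ℝ) (A : Set M) : Set M := {m | m ∈ A ∧ p m ≠ 0}

/-- S is a maximal consistent subset of Δ. -/
def IsMaxConsistent (Δ S : Finset (Set M)) : Prop :=
  S ⊆ Δ ∧ Mdl S ≠ ∅ ∧ ∀ B ∈ Δ \ S, Mdl (insert B S) = ∅

/-- Cardinality-maximal consistent subsets of Δ. -/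
def MCS (Δ : Finset (Set M)) : Set (Finset (Set M)) :=
  {S | IsMaxConsistent Δ S ∧ ∀ S', IsMaxConsistent Δ S' → S'.card ≤ S.card}

/-- Approximate models of Δ. -/
def AMod (Δ : Finset (Set M)) : Set M := ⋃ S ∈ MCS Δ, Mdl S

/-- S is a maximal possible subset of Δ (w.r.t. p). -/
def IsMaxPossible (p : M → ℝ) (Δ S : Finset (Set M)) : Prop :=
  S ⊆ Δ ∧ PMod p S ≠ ∅ ∧ ∀ B ∈ Δ \ S, PMod p (insert B S) = ∅

/-- Cardinality-maximal possible subsets of Δ. -/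
def MPS (p : M → ℝ) (Δ : Finset (Set M)) : Set (Finset (Set M)) :=
  {S | IsMaxPossible p Δ S ∧ ∀ S', IsMaxPossible p Δ S' → S'.card ≤ S.card}

/-- Possible approximate models of Δ. -/
def PAMod (p : M → ℝ) (Δ : Finset (Set M)) : Set M := ⋃ S ∈ MPS p Δ, PMod p S

lemma ellS_one {M : Type*} (Δ : Finset (Set M)) (m : M) :
    ellS 1 Δ m = if m ∈ Mdl Δ then 1 else 0 := by
  classical
  unfold ellS ell Mdl
  simp only [Set.mem_setOf_eq]
  by_cases h : ∀ B ∈ Δ, m ∈ B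
  · rw [if_pos h]
    exact Finset.prod_eq_one (fun B hB => if_pos (h B hB))
  · rw [if_neg h]
    push_neg at h
    obtain ⟨B, hB, hm⟩ := h
    exact Finset.prod_eq_zero hB (by simp [hm])

/-- with μ = 1 and the model assumption, conditioning is
classical conditioning on the models of Δ. -/
theorem stmt_1 [Fintype M] [Nonempty M] (p : M → ℝ)
    (hp : ∀ m, 0 ≤ p m) (hps : ∑ m, p m = 1) (hpos : ∀ m, p m ≠ 0)
    (A : Set M) (Δ : Finset (Set M)) (hΔ : Mdl Δ ≠ ∅) :
    condP p 1 A Δ =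
      (∑ m ∈ Finset.univ.filter (fun m => m ∈ Mdl Δ ∩ A), p m) /
      (∑ m ∈ Finset.univ.filter (fun m => m ∈ Mdl Δ), p m) := by
  unfold condP
  congr 1
  · rw [Finset.sum_filter]
    apply Finset.sum_congr rfl
    intro m _
    rw [ellS_one]
    unfold ell
    by_cases h1 : m ∈ Mdl Δ <;> by_cases h2 : m ∈ A <;>
      simp [h1, h2, Set.mem_inter_iff]
  · rw [Finset.sum_filter]
    apply Finset.sum_congr rfl
    intro m _
    rw [ellS_one]
    by_cases h1 : m ∈ Mdl Δ <;> simp [h1]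
end
end

section
/- Let μ = 1 and assume p m ≠ 0 for every m ∈ M. For every formula A ⊆ M and every finite set Δ of formulas with ⟦Δ⟧ ≠ ∅: P₁(A | Δ) = 1 if and only if ⟦Δ⟧ ⊆ A (i.e. A is a classical consequence of Δ). -/
open Classical

noncomputable section

variable {M : Type*}

/-- with μ = 1 and the model assumption, probability one
characterizes classical consequence. -/
theorem stmt_2 [Fintype M] [Nonempty M] (p : M → ℝ)
    (hp : ∀ m, 0 ≤ p m) (hps : ∑ m, p m = 1) (hpos : ∀ m, p m ≠ 0)
    (A : Set M) (Δ : Finset (Set M)) (hΔ : Mdl Δ ≠ ∅) :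
    condP p 1 A Δ = 1 ↔ Mdl Δ ⊆ A := by
  have hellS : ∀ m : M, ellS (1:ℝ) Δ m = if m ∈ Mdl Δ then 1 else 0 := by
    intro m
    by_cases h : m ∈ Mdl Δ
    · simp only [h, if_true, ellS]
      refine Finset.prod_eq_one ?_
      intro B hB
      simp [ell, h B hB]
    · simp only [h, if_false, ellS]
      obtain ⟨B, hB, hmB⟩ : ∃ B ∈ Δ, m ∉ B := by
        by_contra hc
        push_neg at hc
        exact h hc
      exact Finset.prod_eq_zero hB (by simp [ell, hmB])
  have hnum : ∀ m : M, ell (1:ℝ) A m * ellS (1:ℝ) Δ m * p m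
      = if m ∈ Mdl Δ ∧ m ∈ A then p m else 0 := by
    intro m
    rw [hellS]
    by_cases h1 : m ∈ Mdl Δ <;> by_cases h2 : m ∈ A <;> simp [ell, h1, h2]
  have hden : ∀ m : M, ellS (1:ℝ) Δ m * p m = if m ∈ Mdl Δ then p m else 0 := by
    intro m; rw [hellS]; by_cases h : m ∈ Mdl Δ <;> simp [h]
  have hden_pos : 0 < ∑ m, ellS (1:ℝ) Δ m * p m := by
    obtain ⟨m0, hm0⟩ := Set.nonempty_iff_ne_empty.2 hΔ
    have : ∑ m, ellS (1:ℝ) Δ m * p m = ∑ m, if m ∈ Mdl Δ then p m else 0 := by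
      exact Finset.sum_congr rfl fun m _ => hden m
    rw [this]
    refine Finset.sum_pos' (fun m _ => ?_) ⟨m0, Finset.mem_univ m0, ?_⟩
    · by_cases h : m ∈ Mdl Δ <;> simp [h, hp m]
    · simp [hm0]
      exact lt_of_le_of_ne (hp m0) (Ne.symm (hpos m0))
  unfold condP
  rw [div_eq_one_iff_eq (ne_of_gt hden_pos)]
  have hle : ∀ m ∈ Finset.univ (α := M),
      ell (1:ℝ) A m * ellS (1:ℝ) Δ m * p m ≤ ellS (1:ℝ) Δ m * p m := by
    intro m _
    rw [hnum, hden]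
    by_cases h1 : m ∈ Mdl Δ <;> by_cases h2 : m ∈ A <;> simp [h1, h2, hp m]
  rw [Finset.sum_eq_sum_iff_of_le hle]
  constructor
  · intro h m hm
    have := h m (Finset.mem_univ m)
    rw [hnum, hden] at this
    by_contra hA
    simp [hm, hA] at this
    exact hpos m this.symm
  · intro h m _
    rw [hnum, hden]
    by_cases h1 : m ∈ Mdl Δ
    · simp [h1, h h1]
    · simp [h1]
end
end

section
/- Let μ = 1 (no assumption on the support of p). For every formula A ⊆ M and every finite set Δ of formulas whose set of possible models ⟦Δ⟧_p is nonempty, P₁(A | Δ) = (∑_{m ∈ ⟦Δ⟧_p ∩ ⟦A⟧_p} p m) / (∑_{m ∈ ⟦Δ⟧_p} p m). -/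
open Classical

noncomputable section

variable {M : Type*}

/-- with μ = 1 (no support assumption), conditioning is
conditioning on the possible models of Δ. -/
theorem stmt_5 [Fintype M] [Nonempty M] (p : M → ℝ)
    (hp : ∀ m, 0 ≤ p m) (hps : ∑ m, p m = 1)
    (A : Set M) (Δ : Finset (Set M)) (hΔ : PMod p Δ ≠ ∅) :
    condP p 1 A Δ =
      (∑ m ∈ Finset.univ.filter (fun m => m ∈ PMod p Δ ∩ PModA p A), p m) /
      (∑ m ∈ Finset.univ.filter (fun m => m ∈ PMod p Δ), p m) := by
  have hell : ∀ (B : Set M) (m : M), ell 1 B m = if m ∈ B then (1:ℝ) else 0 := by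
    intro B m; simp [ell]
  have hellS : ∀ m, ellS 1 Δ m = if (∀ B ∈ Δ, m ∈ B) then (1:ℝ) else 0 := by
    intro m
    simp only [ellS, hell]
    classical
    rw [Finset.prod_boole]; congr 1
  unfold condP
  rw [Finset.sum_filter, Finset.sum_filter]
  congr 1
  · apply Finset.sum_congr rfl
    intro m _
    rw [hell, hellS]
    by_cases hpm : p m = 0
    · simp [hpm, PMod, PModA]
    · by_cases hA : m ∈ A <;> by_cases hM : (∀ B ∈ Δ, m ∈ B) <;>
        simp [hA, hM, hpm, PMod, PModA]
  · apply Finset.sum_congr rfl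
    intro m _
    rw [hellS]
    by_cases hpm : p m = 0
    · simp [hpm, PMod]
    · by_cases hM : (∀ B ∈ Δ, m ∈ B) <;> simp [hM, hpm, PMod]
end
end

section
/- Let μ = 1. For every formula A ⊆ M and every finite set Δ of formulas with ⟦Δ⟧_p ≠ ∅: P₁(A | Δ) = 1 if and only if ⟦Δ⟧_p ⊆ ⟦A⟧_p (i.e. A is a consequence of Δ with respect to p). -/
open Classical

noncomputable section

variable {M : Type*}

/-- with μ = 1, probability one characterizes the consequence
relation based on possible models. -/
theorem stmt_6 [Fintype M] [Nonempty M] (p : M → ℝ)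
    (hp : ∀ m, 0 ≤ p m) (hps : ∑ m, p m = 1)
    (A : Set M) (Δ : Finset (Set M)) (hΔ : PMod p Δ ≠ ∅) :
    condP p 1 A Δ = 1 ↔ PMod p Δ ⊆ PModA p A := by
  classical
  obtain ⟨m0, hm0Δ, hm0p⟩ : ∃ m, m ∈ PMod p Δ := Set.nonempty_iff_ne_empty.mpr hΔ
  have hellS : ∀ m, ellS (1:ℝ) Δ m = if (∀ B ∈ Δ, m ∈ B) then 1 else 0 := by
    intro m
    simp [ellS, ell, Finset.prod_boole]
  have hnum : ∀ m, ell (1:ℝ) A m * ellS (1:ℝ) Δ m * p m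
      = if (m ∈ A ∧ ∀ B ∈ Δ, m ∈ B) then p m else 0 := by
    intro m
    rw [hellS, ell]
    by_cases h1 : m ∈ A <;> by_cases h2 : ∀ B ∈ Δ, m ∈ B <;>
      simp [h1, h2]
  have hden : ∀ m, ellS (1:ℝ) Δ m * p m
      = if (∀ B ∈ Δ, m ∈ B) then p m else 0 := by
    intro m
    rw [hellS]
    by_cases h2 : ∀ B ∈ Δ, m ∈ B <;> simp [h2]
  set N : ℝ := ∑ m, (if (m ∈ A ∧ ∀ B ∈ Δ, m ∈ B) then p m else 0) with hN
  set D : ℝ := ∑ m, (if (∀ B ∈ Δ, m ∈ B) then p m else 0) with hD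
  have hCP : condP p 1 A Δ = N / D := by
    unfold condP
    rw [Finset.sum_congr rfl (fun m _ => hnum m),
        Finset.sum_congr rfl (fun m _ => hden m)]
  have hDpos : 0 < D := by
    apply Finset.sum_pos' (fun m _ => by split_ifs; exacts [hp m, le_rfl])
    exact ⟨m0, Finset.mem_univ m0, by
      rw [if_pos hm0Δ]
      exact lt_of_le_of_ne (hp m0) (Ne.symm hm0p)⟩
  have hle : ∀ m ∈ Finset.univ,
      (if (m ∈ A ∧ ∀ B ∈ Δ, m ∈ B) then p m else 0)
      ≤ (if (∀ B ∈ Δ, m ∈ B) then p m else 0) := by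
    intro m _
    split_ifs with h1 h2
    · exact le_rfl
    · exact absurd h1.2 h2
    · exact hp m
    · exact le_rfl
  rw [hCP, div_eq_one_iff_eq (ne_of_gt hDpos)]
  rw [hN, hD, Finset.sum_eq_sum_iff_of_le hle]
  constructor
  · intro h m hm
    obtain ⟨hmΔ, hmp⟩ := hm
    have := h m (Finset.mem_univ m)
    rw [if_pos hmΔ] at this
    by_cases h1 : m ∈ A
    · exact ⟨h1, hmp⟩
    · rw [if_neg (fun hc => h1 hc.1)] at this
      exact absurd this.symm hmp
  · intro h m _
    by_cases h2 : ∀ B ∈ Δ, m ∈ B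
    · rw [if_pos h2]
      by_cases hmp : p m = 0
      · by_cases h1 : m ∈ A <;> simp [h1, h2, hmp]
      · have : m ∈ A := (h ⟨h2, hmp⟩).1
        rw [if_pos ⟨this, h2⟩]
    · rw [if_neg h2, if_neg (fun hc => h2 hc.2)]
end
end

section
/- If a formula B ⊆ M has no models (B = ∅) and μ ∈ (0,1), then conditioning on B has no effect: P_μ(A | {B}) = P_μ(A) for every formula A ⊆ M. -/
open Classical

noncomputable section

variable {M : Type*}

/-- conditioning on a formula with no models has no effect
when μ ∈ (0,1). -/
theorem stmt_7 [Fintype M] [Nonempty M] (p : M → ℝ)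
    (hp : ∀ m, 0 ≤ p m) (hps : ∑ m, p m = 1)
    (μ : ℝ) (hμ : μ ∈ Set.Ioo (0 : ℝ) 1)
    (B : Set M) (hB : B = ∅) (A : Set M) :
    condP p μ A ({B} : Finset (Set M)) = ∑ m, ell μ A m * p m := by
  have hμ1 : (1:ℝ) - μ ≠ 0 := sub_ne_zero.2 (ne_of_gt hμ.2)
  have hell : ∀ m, ellS μ ({B} : Finset (Set M)) m = 1 - μ := by
    intro m
    simp [ellS, ell, hB]
  simp only [condP, hell]
  rw [show (∑ m, ell μ A m * (1 - μ) * p m) = (1-μ) * ∑ m, ell μ A m * p m by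
        rw [Finset.mul_sum]; congr 1; ext m; ring,
      show (∑ m, (1 - μ) * p m) = (1-μ) * ∑ m, p m by rw [Finset.mul_sum],
      hps, mul_one, mul_div_assoc]
  field_simp
end
end

section
/- Assume p m ≠ 0 for every m ∈ M (the model assumption). For every formula A ⊆ M and every finite set Δ of formulas whose set of approximate models ⟦Δ⟧_am is nonempty, the conditional probability converges as μ → 1 from below: lim_{μ→1⁻} P_μ(A | Δ) = (∑_{m ∈ ⟦Δ⟧_am ∩ A} p m) / (∑_{m ∈ ⟦Δ⟧_am} p m). -/
open Classical

noncomputable section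

variable {M : Type*}

/-- Number of formulas in `Δ` satisfied by `m`. -/
def kk (Δ : Finset (Set M)) (m : M) : ℕ := (Δ.filter (fun B => m ∈ B)).card

lemma subset_Sm {Δ S : Finset (Set M)} (hS : S ⊆ Δ) {m : M} (hm : m ∈ Mdl S) :
    S ⊆ Δ.filter (fun B => m ∈ B) := by
  intro B hB
  exact Finset.mem_filter.mpr ⟨hS hB, hm B hB⟩

lemma isMaxCons_Sm {Δ : Finset (Set M)} {m : M}
    (hmax : ∀ m', kk Δ m' ≤ kk Δ m) :
    IsMaxConsistent Δ (Δ.filter (fun B => m ∈ B)) := by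
  refine ⟨Finset.filter_subset _ _, ?_, ?_⟩
  · intro hE
    have hm : m ∈ Mdl (Δ.filter (fun B => m ∈ B)) :=
      fun B hB => (Finset.mem_filter.mp hB).2
    rw [hE] at hm
    exact hm
  · intro B hB
    by_contra hne
    obtain ⟨m', hm'⟩ := Set.nonempty_iff_ne_empty.mpr hne
    have hsub : insert B (Δ.filter (fun B => m ∈ B)) ⊆ Δ.filter (fun B => m' ∈ B) := by
      refine subset_Sm ?_ hm'
      intro C hC
      rcases Finset.mem_insert.mp hC with h | h
      · exact h ▸ (Finset.mem_sdiff.mp hB).1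
      · exact Finset.filter_subset _ _ h
    have hB' : B ∉ Δ.filter (fun B => m ∈ B) := (Finset.mem_sdiff.mp hB).2
    have hcard : kk Δ m + 1 ≤ kk Δ m' := by
      calc kk Δ m + 1 = (insert B (Δ.filter (fun B => m ∈ B))).card :=
            (Finset.card_insert_of_notMem hB').symm
        _ ≤ _ := Finset.card_le_card hsub
    have := hmax m'
    omega

lemma card_le_of_cons {Δ S : Finset (Set M)} (h : IsMaxConsistent Δ S) (m : M)
    (hmax : ∀ m', kk Δ m' ≤ kk Δ m) : S.card ≤ kk Δ m := by
  obtain ⟨m', hm'⟩ := Set.nonempty_iff_ne_empty.mpr h.2.1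
  exact le_trans (Finset.card_le_card (subset_Sm h.1 hm')) (hmax m')

lemma amod_eq [Fintype M] [Nonempty M] (Δ : Finset (Set M)) :
    AMod Δ = {m | ∀ m', kk Δ m' ≤ kk Δ m} := by
  obtain ⟨m0, -, hm0⟩ := Finset.exists_max_image Finset.univ (kk Δ)
    ⟨Classical.arbitrary M, Finset.mem_univ _⟩
  have hm0' : ∀ m', kk Δ m' ≤ kk Δ m0 := fun m' => hm0 m' (Finset.mem_univ _)
  ext m
  simp only [AMod, Set.mem_iUnion, Set.mem_setOf_eq, exists_prop]
  constructor
  · rintro ⟨S, hS, hmS⟩ m'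
    have h1 : S.card ≤ kk Δ m := Finset.card_le_card (subset_Sm hS.1.1 hmS)
    have h2 : kk Δ m0 ≤ S.card := hS.2 _ (isMaxCons_Sm hm0')
    exact le_trans (hm0' m') (le_trans h2 h1)
  · intro hmax
    refine ⟨Δ.filter (fun B => m ∈ B), ⟨isMaxCons_Sm hmax, ?_⟩,
      fun B hB => (Finset.mem_filter.mp hB).2⟩
    intro S' hS'
    exact card_le_of_cons hS' m hmax

lemma ellS_eq (μ : ℝ) (Δ : Finset (Set M)) (m : M) :
    ellS μ Δ m = μ ^ (kk Δ m) * (1 - μ) ^ (Δ.card - kk Δ m) := by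
  rw [ellS, ← Finset.prod_filter_mul_prod_filter_not Δ (fun B => m ∈ B)]
  congr 1
  · rw [Finset.prod_congr rfl (g := fun _ => μ)
      (fun B hB => by simp [ell, (Finset.mem_filter.mp hB).2]), Finset.prod_const]
    rfl
  · rw [Finset.prod_congr rfl (g := fun _ => 1 - μ)
      (fun B hB => by simp [ell, (Finset.mem_filter.mp hB).2]), Finset.prod_const]
    congr 1
    have := Finset.card_filter_add_card_filter_not (s := Δ) (p := fun B => m ∈ B)
    unfold kk
    omega

/-- with the model assumption, as μ → 1⁻ the conditional
probability converges to conditioning on the approximate models of Δ. -/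
theorem stmt_10 [Fintype M] [Nonempty M] (p : M → ℝ)
    (hp : ∀ m, 0 ≤ p m) (hps : ∑ m, p m = 1) (hpos : ∀ m, p m ≠ 0)
    (A : Set M) (Δ : Finset (Set M)) (h : AMod Δ ≠ ∅) :
    Filter.Tendsto (fun μ => condP p μ A Δ)
      (nhdsWithin 1 (Set.Ico (0 : ℝ) 1))
      (nhds ((∑ m ∈ Finset.univ.filter (fun m => m ∈ AMod Δ ∩ A), p m) /
             (∑ m ∈ Finset.univ.filter (fun m => m ∈ AMod Δ), p m))) := by
  classical
  set k : M → ℕ := kk Δ with hk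
  obtain ⟨m0, -, hm0⟩ := Finset.exists_max_image Finset.univ k
    ⟨Classical.arbitrary M, Finset.mem_univ _⟩
  have hm0' : ∀ m', k m' ≤ k m0 := fun m' => hm0 m' (Finset.mem_univ _)
  set K := k m0 with hK
  set n := Δ.card with hn
  have hkK : ∀ m, k m ≤ K := hm0'
  have hKn : K ≤ n := Finset.card_le_card (Finset.filter_subset _ _)
  -- membership in AMod
  have hmem : ∀ m, m ∈ AMod Δ ↔ k m = K := by
    intro m
    rw [amod_eq]
    constructor
    · intro hmx
      exact le_antisymm (hkK m) (hmx m0)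
    · intro hkm m'
      rw [← hk, hkm]
      exact hkK m'
  -- the reduced numerator/denominator
  set N : ℝ → ℝ := fun μ => ∑ m, ell μ A m * (μ ^ k m * (1 - μ) ^ (K - k m)) * p m with hN
  set D : ℝ → ℝ := fun μ => ∑ m, (μ ^ k m * (1 - μ) ^ (K - k m)) * p m with hD
  have hcongr : ∀ μ ∈ Set.Ico (0 : ℝ) 1, condP p μ A Δ = N μ / D μ := by
    intro μ hμ
    have hμ1 : (1 : ℝ) - μ ≠ 0 := by
      have := hμ.2; intro hc; linarith [sub_eq_zero.mp hc]
    have hc : ((1 : ℝ) - μ) ^ (n - K) ≠ 0 := pow_ne_zero _ hμ1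
    have hfac : ∀ m : M, ellS μ Δ m =
        (1 - μ) ^ (n - K) * (μ ^ k m * (1 - μ) ^ (K - k m)) := by
      intro m
      rw [ellS_eq]
      have hexp : n - k m = (n - K) + (K - k m) := by
        have := hkK m; omega
      rw [← hk, ← hn, hexp, pow_add]
      ring
    rw [condP]
    have h1 : (∑ m, ell μ A m * ellS μ Δ m * p m) =
        (1 - μ) ^ (n - K) * N μ := by
      rw [hN, Finset.mul_sum]
      refine Finset.sum_congr rfl fun m _ => ?_
      rw [hfac m]; ring
    have h2 : (∑ m, ellS μ Δ m * p m) = (1 - μ) ^ (n - K) * D μ := by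
      rw [hD, Finset.mul_sum]
      refine Finset.sum_congr rfl fun m _ => ?_
      rw [hfac m]; ring
    rw [h1, h2, mul_div_mul_left _ _ hc]
  -- continuity
  have hellA : ∀ m : M, Continuous (fun μ : ℝ => ell μ A m) := by
    intro m
    unfold ell
    split_ifs
    · exact continuous_id
    · exact continuous_const.sub continuous_id
  have hNc : Continuous N := by
    refine continuous_finset_sum _ fun m _ => ?_
    exact ((hellA m).mul ((continuous_pow (k m)).mul
      ((continuous_const.sub continuous_id).pow (K - k m)))).mul continuous_const
  have hDc : Continuous D := by
    refine continuous_finset_sum _ fun m _ => ?_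
    exact ((continuous_pow (k m)).mul
      ((continuous_const.sub continuous_id).pow (K - k m))).mul continuous_const
  -- values at 1
  have hterm : ∀ m : M, ((1 : ℝ) ^ k m * (1 - 1) ^ (K - k m)) =
      if m ∈ AMod Δ then (1 : ℝ) else 0 := by
    intro m
    rw [one_pow, one_mul, sub_self, hmem]
    by_cases hm : k m = K
    · simp [hm]
    · have : K - k m ≠ 0 := by have := hkK m; omega
      simp [hm, zero_pow this]
  have hN1 : N 1 = ∑ m ∈ Finset.univ.filter (fun m => m ∈ AMod Δ ∩ A), p m := by
    rw [hN, Finset.sum_filter]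
    refine Finset.sum_congr rfl fun m _ => ?_
    rw [hterm m, ell]
    by_cases hA : m ∈ A <;> by_cases hAM : m ∈ AMod Δ <;>
      simp [hA, hAM, Set.mem_inter_iff]
  have hD1 : D 1 = ∑ m ∈ Finset.univ.filter (fun m => m ∈ AMod Δ), p m := by
    rw [hD, Finset.sum_filter]
    refine Finset.sum_congr rfl fun m _ => ?_
    rw [hterm m]
    by_cases hAM : m ∈ AMod Δ <;> simp [hAM]
  have hD1pos : 0 < D 1 := by
    rw [hD1]
    refine Finset.sum_pos (fun m _ => lt_of_le_of_ne (hp m) (Ne.symm (hpos m))) ?_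
    exact ⟨m0, Finset.mem_filter.mpr ⟨Finset.mem_univ _, (hmem m0).mpr rfl⟩⟩
  have hD1ne : D 1 ≠ 0 := ne_of_gt hD1pos
  have htend : Filter.Tendsto (fun μ => N μ / D μ)
      (nhdsWithin 1 (Set.Ico (0 : ℝ) 1)) (nhds (N 1 / D 1)) :=
    (((hNc.tendsto 1).div (hDc.tendsto 1) hD1ne).mono_left nhdsWithin_le_nhds)
  rw [← hN1, ← hD1]
  refine Filter.Tendsto.congr' ?_ htend
  filter_upwards [self_mem_nhdsWithin] with μ hμ
  exact (hcongr μ hμ).symm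
end
end

section
/- Assume p m ≠ 0 for every m ∈ M. For every formula A ⊆ M and every finite set Δ of formulas with ⟦Δ⟧_am ≠ ∅: lim_{μ→1⁻} P_μ(A | Δ) = 1 if and only if ⟦S⟧ ⊆ A for every cardinality-maximal consistent subset S of Δ (i.e. A is a classical consequence of every S ∈ MCS(Δ)). -/
open Classical

noncomputable section

variable {M : Type*}

/-! Write k(m) for the number of formulas of Δ true in m, so that
ℓ_μ(Δ,m) = μ ^ k(m) * (1 - μ) ^ (|Δ| - k(m)). The cardinality-maximal consistent subsets of Δ are
exactly the sets of formulas true in a model maximizing k, hence ⟦Δ⟧_am is the set of maximizers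
of k; let K be the maximum. Dividing numerator and denominator of P_μ(A | Δ) by
(1 - μ) ^ (|Δ| - K) leaves continuous functions of μ whose values at μ = 1 are the p-masses of
⟦Δ⟧_am ∩ A and of ⟦Δ⟧_am. As p > 0, their ratio is 1 iff ⟦Δ⟧_am ⊆ A. -/

open Filter Topology Finset

def satCount (Δ : Finset (Set M)) (m : M) : ℕ := #(Δ.filter (m ∈ ·))

lemma ellS_eq_pow_satCount (μ : ℝ) (Δ : Finset (Set M)) (m : M) :
    ellS μ Δ m = μ ^ satCount Δ m * (1 - μ) ^ (#Δ - satCount Δ m) := by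
  rw [ellS, satCount, ← card_filter_add_card_filter_not (s := Δ) (m ∈ ·), Nat.add_sub_cancel_left]
  simp only [ell]
  rw [prod_ite, prod_const, prod_const]

lemma mem_Mdl_filter (Δ : Finset (Set M)) (m : M) : m ∈ Mdl (Δ.filter (m ∈ ·)) :=
  fun _ hB => (mem_filter.mp hB).2

lemma card_le_satCount {Δ S : Finset (Set M)} {m : M} (hS : S ⊆ Δ) (hm : m ∈ Mdl S) :
    #S ≤ satCount Δ m :=
  card_le_card fun B hB => mem_filter.mpr ⟨hS hB, hm B hB⟩

lemma card_le_satCount_of_forall_le {Δ S : Finset (Set M)} {m : M}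
    (hm : ∀ m', satCount Δ m' ≤ satCount Δ m) (hS : S ⊆ Δ) (hcons : Mdl S ≠ ∅) :
    #S ≤ satCount Δ m := by
  obtain ⟨m', hm'⟩ := Set.nonempty_iff_ne_empty.mpr hcons
  exact (card_le_satCount hS hm').trans (hm m')

lemma filter_mem_MCS {Δ : Finset (Set M)} {m : M} (hm : ∀ m', satCount Δ m' ≤ satCount Δ m) :
    Δ.filter (m ∈ ·) ∈ MCS Δ := by
  refine ⟨⟨filter_subset _ _, Set.nonempty_iff_ne_empty.mp ⟨m, mem_Mdl_filter Δ m⟩,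
    fun B hB => by_contra fun hcons => ?_⟩,
    fun S hS => card_le_satCount_of_forall_le hm hS.1 hS.2.1⟩
  obtain ⟨hBΔ, hBS⟩ := mem_sdiff.mp hB
  have hcard := card_le_satCount_of_forall_le hm (insert_subset hBΔ (filter_subset _ _)) hcons
  rw [card_insert_of_notMem hBS] at hcard
  exact Nat.not_succ_le_self _ hcard

lemma mem_AMod_iff [Finite M] {Δ : Finset (Set M)} {m : M} :
    m ∈ AMod Δ ↔ ∀ m', satCount Δ m' ≤ satCount Δ m := by
  refine ⟨fun hm m' => ?_, fun hm => Set.mem_iUnion₂.mpr ⟨_, filter_mem_MCS hm, mem_Mdl_filter Δ m⟩⟩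
  obtain ⟨S, hS, hmS⟩ := Set.mem_iUnion₂.mp hm
  have : Nonempty M := ⟨m⟩
  obtain ⟨m₀, hm₀⟩ := Finite.exists_max (satCount Δ)
  calc satCount Δ m' ≤ satCount Δ m₀ := hm₀ m'
    _ ≤ #S := hS.2 _ (filter_mem_MCS hm₀).1
    _ ≤ satCount Δ m := card_le_satCount hS.1.1 hmS

def normalizedLik (Δ : Finset (Set M)) (K : ℕ) (μ : ℝ) (m : M) : ℝ :=
  μ ^ satCount Δ m * (1 - μ) ^ (K - satCount Δ m)

lemma ellS_eq_mul_normalizedLik {Δ : Finset (Set M)} {K : ℕ} {m : M} (hm : satCount Δ m ≤ K)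
    (hKΔ : K ≤ #Δ) (μ : ℝ) :
    ellS μ Δ m = (1 - μ) ^ (#Δ - K) * normalizedLik Δ K μ m := by
  rw [ellS_eq_pow_satCount, normalizedLik, show #Δ - satCount Δ m = #Δ - K + (K - satCount Δ m) by
    omega, pow_add]
  ring

lemma normalizedLik_one {Δ : Finset (Set M)} {K : ℕ} {m : M} (hm : satCount Δ m ≤ K) :
    normalizedLik Δ K 1 m = if satCount Δ m = K then 1 else 0 := by
  split_ifs with hK
  · simp [normalizedLik, hK]
  · simp [normalizedLik, Nat.sub_ne_zero_of_lt (hm.lt_of_ne hK)]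

@[fun_prop]
lemma continuous_ell (B : Set M) (m : M) : Continuous fun μ : ℝ => ell μ B m := by
  unfold ell
  split_ifs <;> fun_prop

@[fun_prop]
lemma continuous_normalizedLik (Δ : Finset (Set M)) (K : ℕ) (m : M) :
    Continuous fun μ => normalizedLik Δ K μ m := by
  unfold normalizedLik
  fun_prop

section Limit

variable [Fintype M] {p : M → ℝ} {A : Set M} {Δ : Finset (Set M)} {K : ℕ}

lemma condP_eq_div_normalizedLik (hK : ∀ m, satCount Δ m ≤ K) (hKΔ : K ≤ #Δ) {μ : ℝ}
    (hμ : μ ≠ 1) :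
    condP p μ A Δ = (∑ m, ell μ A m * normalizedLik Δ K μ m * p m) /
      ∑ m, normalizedLik Δ K μ m * p m := by
  have hc : (1 - μ) ^ (#Δ - K) ≠ 0 := pow_ne_zero _ (sub_ne_zero.mpr hμ.symm)
  simp only [condP, ellS_eq_mul_normalizedLik (hK _) hKΔ]
  rw [← mul_div_mul_left (∑ m, ell μ A m * normalizedLik Δ K μ m * p m) _ hc, mul_sum, mul_sum]
  congr 1 <;> exact sum_congr rfl fun m _ => by ring

lemma tendsto_condP (hK : ∀ m, satCount Δ m ≤ K) (hKΔ : K ≤ #Δ)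
    (hG : ∑ m with satCount Δ m = K, p m ≠ 0) :
    Tendsto (fun μ => condP p μ A Δ) (𝓝[≠] 1)
      (𝓝 ((∑ m with satCount Δ m = K, ell 1 A m * p m) / ∑ m with satCount Δ m = K, p m)) := by
  have hF : ∑ m, ell 1 A m * normalizedLik Δ K 1 m * p m =
      ∑ m with satCount Δ m = K, ell 1 A m * p m := by
    rw [sum_filter]
    exact sum_congr rfl fun m _ => by rw [normalizedLik_one (hK m)]; split_ifs <;> ring
  have hG' : ∑ m, normalizedLik Δ K 1 m * p m = ∑ m with satCount Δ m = K, p m := by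
    rw [sum_filter]
    exact sum_congr rfl fun m _ => by rw [normalizedLik_one (hK m)]; split_ifs <;> ring
  have hFc : Continuous fun μ => ∑ m, ell μ A m * normalizedLik Δ K μ m * p m := by fun_prop
  have hGc : Continuous fun μ => ∑ m, normalizedLik Δ K μ m * p m := by fun_prop
  have hcont := (hFc.tendsto 1).div (hGc.tendsto 1) (by rwa [hG'])
  rw [hF, hG'] at hcont
  refine (hcont.mono_left nhdsWithin_le_nhds).congr' ?_
  filter_upwards [self_mem_nhdsWithin] with μ hμ
  exact (condP_eq_div_normalizedLik hK hKΔ hμ).symm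

end Limit

lemma sum_ell_one_mul_div_sum_eq_one_iff {s : Finset M} {p : M → ℝ} {A : Set M}
    (hs : s.Nonempty) (hp : ∀ m ∈ s, 0 < p m) :
    (∑ m ∈ s, ell 1 A m * p m) / ∑ m ∈ s, p m = 1 ↔ ∀ m ∈ s, m ∈ A := by
  rw [div_eq_one_iff_eq (sum_pos hp hs).ne', sum_eq_sum_iff_of_le]
  · refine forall₂_congr fun m hm => ?_
    by_cases hmA : m ∈ A <;> simp [ell, hmA, (hp m hm).ne]
  · intro m hm
    by_cases hmA : m ∈ A <;> simp [ell, hmA, (hp m hm).le]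

theorem stmt_11_general [Fintype M] (p : M → ℝ)
    (hp : ∀ m, 0 ≤ p m) (hpos : ∀ m, p m ≠ 0)
    (A : Set M) (Δ : Finset (Set M)) (h : AMod Δ ≠ ∅) :
    Filter.Tendsto (fun μ => condP p μ A Δ)
        (nhdsWithin 1 (Set.Ico (0 : ℝ) 1)) (nhds 1) ↔
      ∀ S ∈ MCS Δ, Mdl S ⊆ A := by
  obtain ⟨m₀, hm₀⟩ := Set.nonempty_iff_ne_empty.mpr h
  set K := satCount Δ m₀
  have hK : ∀ m, satCount Δ m ≤ K := mem_AMod_iff.mp hm₀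
  set T := univ.filter (satCount Δ · = K)
  have hAMod : AMod Δ = T := by
    ext m
    simp only [mem_AMod_iff, T, coe_filter, mem_univ, true_and, Set.mem_ofPred_eq]
    exact ⟨fun hm => le_antisymm (hK m) (hm m₀), fun hm m' => hm ▸ hK m'⟩
  have hpT : ∀ m ∈ T, 0 < p m := fun m _ => (hp m).lt_of_ne' (hpos m)
  have hT : T.Nonempty := ⟨m₀, mem_filter.mpr ⟨mem_univ _, rfl⟩⟩
  have hlim := (tendsto_condP (A := A) hK (card_filter_le _ _) (sum_pos hpT hT).ne').mono_left
    (nhdsWithin_mono (1 : ℝ) (s := Set.Ico 0 1) fun μ hμ => hμ.2.ne)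
  have := right_nhdsWithin_Ico_neBot (zero_lt_one' ℝ)
  have hMCS : (∀ S ∈ MCS Δ, Mdl S ⊆ A) ↔ AMod Δ ⊆ A := Set.iUnion₂_subset_iff.symm
  rw [hMCS, hAMod]
  calc _ ↔ _ = (1 : ℝ) := ⟨tendsto_nhds_unique hlim, fun h1 => by rwa [h1] at hlim⟩
    _ ↔ ↑T ⊆ A := sum_ell_one_mul_div_sum_eq_one_iff hT hpT

/-- with the model assumption, the μ → 1⁻ limit of the
conditional probability is 1 iff A is a classical consequence of every
cardinality-maximal consistent subset of Δ. -/
theorem stmt_11 [Fintype M] [Nonempty M] (p : M → ℝ)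
    (hp : ∀ m, 0 ≤ p m) (hps : ∑ m, p m = 1) (hpos : ∀ m, p m ≠ 0)
    (A : Set M) (Δ : Finset (Set M)) (h : AMod Δ ≠ ∅) :
    Filter.Tendsto (fun μ => condP p μ A Δ)
        (nhdsWithin 1 (Set.Ico (0 : ℝ) 1)) (nhds 1) ↔
      ∀ S ∈ MCS Δ, Mdl S ⊆ A :=
  stmt_11_general p hp hpos A Δ h
end
end

section
/- Assume p m ≠ 0 for every m ∈ M. If Δ is a finite set of formulas no single member of which is satisfied by any model (B = ∅ for every B ∈ Δ), then for every formula A ⊆ M, lim_{μ→1⁻} P_μ(A | Δ) = ∑_{m ∈ A} p m, i.e. conditioning on Δ has no effect in the limit: the limit equals p(A). -/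
open Classical

noncomputable section

variable {M : Type*}

/-- with the model assumption, if no member of Δ has any
model then conditioning on Δ has no effect in the μ → 1⁻ limit. -/
theorem stmt_12 [Fintype M] [Nonempty M] (p : M → ℝ)
    (hp : ∀ m, 0 ≤ p m) (hps : ∑ m, p m = 1) (hpos : ∀ m, p m ≠ 0)
    (Δ : Finset (Set M)) (hΔ : ∀ B ∈ Δ, B = (∅ : Set M)) (A : Set M) :
    Filter.Tendsto (fun μ => condP p μ A Δ)
      (nhdsWithin 1 (Set.Ico (0 : ℝ) 1))
      (nhds (∑ m ∈ Finset.univ.filter (fun m => m ∈ A), p m)) := by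
  have hconst : ∀ μ : ℝ, ∀ m : M, ellS μ Δ m = (1 - μ) ^ Δ.card := by
    intro μ m
    unfold ellS
    rw [Finset.prod_congr rfl (fun B hB => ?_), Finset.prod_const]
    unfold ell
    rw [hΔ B hB]
    simp
  have heq : ∀ μ ∈ Set.Ico (0:ℝ) 1,
      condP p μ A Δ = ∑ m, ell μ A m * p m := by
    intro μ hμ
    have h1 : (1 : ℝ) - μ ≠ 0 := by
      have := hμ.2; linarith
    have hpow : ((1:ℝ) - μ) ^ Δ.card ≠ 0 := pow_ne_zero _ h1
    unfold condP
    simp only [hconst]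
    rw [show (∑ m, ell μ A m * ((1 - μ) ^ Δ.card) * p m)
        = ((1 - μ) ^ Δ.card) * ∑ m, ell μ A m * p m by
      rw [Finset.mul_sum]; apply Finset.sum_congr rfl; intro m _; ring,
      show (∑ m : M, ((1:ℝ) - μ) ^ Δ.card * p m) = ((1 - μ) ^ Δ.card) * ∑ m, p m by
      rw [Finset.mul_sum]]
    rw [hps, mul_one]; field_simp
  have hcont : Filter.Tendsto (fun μ : ℝ => ∑ m, ell μ A m * p m)
      (nhdsWithin 1 (Set.Ico (0:ℝ) 1))
      (nhds (∑ m ∈ Finset.univ.filter (fun m => m ∈ A), p m)) := by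
    have hc : Continuous (fun μ : ℝ => ∑ m, ell μ A m * p m) := by
      apply continuous_finset_sum
      intro m _
      apply Continuous.mul _ continuous_const
      unfold ell
      by_cases h : m ∈ A <;> simp [h] <;> continuity
    have := hc.continuousAt (x := (1:ℝ))
    have hval : (∑ m, ell 1 A m * p m)
        = ∑ m ∈ Finset.univ.filter (fun m => m ∈ A), p m := by
      rw [Finset.sum_filter]
      apply Finset.sum_congr rfl
      intro m _
      unfold ell
      by_cases h : m ∈ A <;> simp [h]
    rw [← hval]
    exact (hc.tendsto 1).mono_left nhdsWithin_le_nhds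
  exact Filter.Tendsto.congr' (by
    filter_upwards [self_mem_nhdsWithin] with μ hμ using (heq μ hμ).symm) hcont
end
end

section
/- If Δ is a finite set of formulas no single member of which is satisfied by any possible model (for every B ∈ Δ and every m ∈ M with p m ≠ 0, m ∉ B), then for every formula A ⊆ M, lim_{μ→1⁻} P_μ(A | Δ) = ∑_{m ∈ A} p m, i.e. conditioning on Δ has no effect in the limit. -/
open Classical

noncomputable section

variable {M : Type*}

/-- if no member of Δ is satisfied by any possible model then
conditioning on Δ has no effect in the μ → 1⁻ limit. -/
theorem stmt_15 [Fintype M] [Nonempty M] (p : M → ℝ)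
    (hp : ∀ m, 0 ≤ p m) (hps : ∑ m, p m = 1)
    (Δ : Finset (Set M)) (hΔ : ∀ B ∈ Δ, ∀ m : M, p m ≠ 0 → m ∉ B)
    (A : Set M) :
    Filter.Tendsto (fun μ => condP p μ A Δ)
      (nhdsWithin 1 (Set.Ico (0 : ℝ) 1))
      (nhds (∑ m ∈ Finset.univ.filter (fun m => m ∈ A), p m)) := by
  have hkey : ∀ μ ∈ Set.Ico (0:ℝ) 1, condP p μ A Δ = ∑ m, ell μ A m * p m := by
    intro μ hμ
    have h1μ : (1 - μ) ≠ 0 := by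
      have := hμ.2; intro h; linarith [sub_eq_zero.mp h]
    have hmul : ∀ m : M, ellS μ Δ m * p m = (1 - μ) ^ Δ.card * p m := by
      intro m
      by_cases hm : p m = 0
      · simp [hm]
      · congr 1
        unfold ellS
        rw [Finset.prod_congr rfl (fun B hB => ?_), Finset.prod_const]
        unfold ell
        rw [if_neg (hΔ B hB m hm)]
    have hnum : ∀ m : M, ell μ A m * ellS μ Δ m * p m
        = (1 - μ) ^ Δ.card * (ell μ A m * p m) := by
      intro m; rw [mul_assoc, hmul m]; ring
    unfold condP
    rw [Finset.sum_congr rfl (fun m _ => hnum m), ← Finset.mul_sum,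
      Finset.sum_congr rfl (fun m _ => hmul m), ← Finset.mul_sum, hps, mul_one,
      mul_comm, mul_div_assoc, div_self (pow_ne_zero _ h1μ), mul_one]
  have hcont : Filter.Tendsto (fun μ : ℝ => ∑ m, ell μ A m * p m)
      (nhdsWithin 1 (Set.Ico (0:ℝ) 1))
      (nhds (∑ m ∈ Finset.univ.filter (fun m => m ∈ A), p m)) := by
    have : Continuous (fun μ : ℝ => ∑ m, ell μ A m * p m) := by
      apply continuous_finset_sum
      intro m _
      unfold ell
      by_cases hm : m ∈ A <;> simp [hm] <;> fun_prop
    have h := (this.tendsto 1).mono_left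
      (nhdsWithin_le_nhds (s := Set.Ico (0:ℝ) 1))
    convert h using 2
    rw [Finset.sum_filter]
    congr 1; ext m; unfold ell
    by_cases hm : m ∈ A <;> simp [hm]
  exact hcont.congr' (Filter.eventually_of_mem self_mem_nhdsWithin
    (fun μ hμ => (hkey μ hμ).symm))
end
end

section
/- Characterization of possible approximate models (key lemma in the proof of the μ→1 limit theorem): for a finite set Δ of formulas, write |Δ|_m = |{B ∈ Δ : m ∈ B}| for the number of formulas of Δ true in m. If ⟦Δ⟧_pam ≠ ∅, then (i) all possible approximate models satisfy the same number of formulas of Δ: |Δ|_{m̂₁} = |Δ|_{m̂₂} for all m̂₁, m̂₂ ∈ ⟦Δ⟧_pam; and (ii) for every m ∉ ⟦Δ⟧_pam, either p m = 0 or |Δ|_m < |Δ|_{m̂} for every m̂ ∈ ⟦Δ⟧_pam. -/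
open Classical

noncomputable section

variable {M : Type*}

/-- characterization of possible approximate models by the
number of formulas of Δ they satisfy. -/
theorem stmt_16 [Fintype M] [Nonempty M] (p : M → ℝ)
    (hp : ∀ m, 0 ≤ p m) (hps : ∑ m, p m = 1)
    (Δ : Finset (Set M)) (h : PAMod p Δ ≠ ∅) :
    (∀ m₁ ∈ PAMod p Δ, ∀ m₂ ∈ PAMod p Δ,
        (Δ.filter (fun B => m₁ ∈ B)).card = (Δ.filter (fun B => m₂ ∈ B)).card) ∧
    (∀ m : M, m ∉ PAMod p Δ → p m = 0 ∨
        ∀ m' ∈ PAMod p Δ,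
          (Δ.filter (fun B => m ∈ B)).card < (Δ.filter (fun B => m' ∈ B)).card) := by
  -- extension lemma
  have extend : ∀ n (S : Finset (Set M)), Δ.card - S.card ≤ n → S ⊆ Δ →
      PMod p S ≠ ∅ → ∃ S', S ⊆ S' ∧ IsMaxPossible p Δ S' := by
    intro n
    induction n with
    | zero =>
      intro S hle hsub hne
      have hS : S = Δ := Finset.eq_of_subset_of_card_le hsub (by omega)
      refine ⟨S, subset_rfl, hsub, hne, ?_⟩
      intro B hB
      rw [hS] at hB
      simp at hB
    | succ n ih =>
      intro S hle hsub hne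
      by_cases hmax : ∀ B ∈ Δ \ S, PMod p (insert B S) = ∅
      · exact ⟨S, subset_rfl, hsub, hne, hmax⟩
      · push_neg at hmax
        obtain ⟨B, hB, hne'⟩ := hmax
        rw [Finset.mem_sdiff] at hB
        have hcard : (insert B S).card = S.card + 1 := Finset.card_insert_of_notMem hB.2
        have hsub' : insert B S ⊆ Δ := Finset.insert_subset hB.1 hsub
        obtain ⟨S', hSS', hmp⟩ := ih (insert B S) (by omega) hsub' (Set.nonempty_iff_ne_empty.mp hne')
        exact ⟨S', (Finset.subset_insert B S).trans hSS', hmp⟩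
  -- get a cardinality-maximal possible subset
  obtain ⟨m₀, hm₀⟩ := Set.nonempty_iff_ne_empty.mpr h
  obtain ⟨S₀, hS₀, _⟩ : ∃ S, S ∈ MPS p Δ ∧ m₀ ∈ PMod p S := by
    simpa [PAMod, Set.mem_iUnion] using hm₀
  set k := S₀.card with hk
  -- every model in PAMod satisfies exactly k formulas
  have hmem : ∀ m ∈ PAMod p Δ, (Δ.filter (fun B => m ∈ B)).card = k := by
    intro m hm
    obtain ⟨S, hS, hmS⟩ : ∃ S, S ∈ MPS p Δ ∧ m ∈ PMod p S := by
      simpa [PAMod, Set.mem_iUnion] using hm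
    have hSk : S.card = k := le_antisymm (hS₀.2 S hS.1) (hS.2 S₀ hS₀.1)
    have hpm : p m ≠ 0 := hmS.2
    have hSF : S ⊆ Δ.filter (fun B => m ∈ B) := by
      intro B hB
      exact Finset.mem_filter.mpr ⟨hS.1.1 hB, hmS.1 B hB⟩
    have hFsub : Δ.filter (fun B => m ∈ B) ⊆ Δ := Finset.filter_subset _ _
    have hFne : PMod p (Δ.filter (fun B => m ∈ B)) ≠ ∅ := by
      intro hc
      have : m ∈ PMod p (Δ.filter (fun B => m ∈ B)) :=
        ⟨fun B hB => (Finset.mem_filter.mp hB).2, hpm⟩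
      rw [hc] at this; exact this
    obtain ⟨S', hFS', hmp⟩ := extend Δ.card _ (by omega) hFsub hFne
    have h1 : k ≤ (Δ.filter (fun B => m ∈ B)).card := hSk ▸ Finset.card_le_card hSF
    have h2 : (Δ.filter (fun B => m ∈ B)).card ≤ k :=
      le_trans (Finset.card_le_card hFS') (hS₀.2 S' hmp)
    omega
  -- any possible model satisfies at most k formulas; equality forces membership
  have hout : ∀ m : M, p m ≠ 0 → m ∉ PAMod p Δ →
      (Δ.filter (fun B => m ∈ B)).card < k := by
    intro m hpm hm
    have hFsub : Δ.filter (fun B => m ∈ B) ⊆ Δ := Finset.filter_subset _ _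
    have hmF : m ∈ PMod p (Δ.filter (fun B => m ∈ B)) :=
      ⟨fun B hB => (Finset.mem_filter.mp hB).2, hpm⟩
    have hFne : PMod p (Δ.filter (fun B => m ∈ B)) ≠ ∅ := by
      intro hc; rw [hc] at hmF; exact hmF
    obtain ⟨S', hFS', hmp⟩ := extend Δ.card _ (by omega) hFsub hFne
    have h2 : (Δ.filter (fun B => m ∈ B)).card ≤ k :=
      le_trans (Finset.card_le_card hFS') (hS₀.2 S' hmp)
    rcases lt_or_eq_of_le h2 with hlt | heq
    · exact hlt
    · exfalso
      have hS'eq : S' = Δ.filter (fun B => m ∈ B) :=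
        (Finset.eq_of_subset_of_card_le hFS'
          (by rw [heq]; exact hS₀.2 S' hmp)).symm
      have hFmps : Δ.filter (fun B => m ∈ B) ∈ MPS p Δ := by
        refine ⟨hS'eq ▸ hmp, ?_⟩
        intro S'' hS''
        rw [heq]; exact hS₀.2 S'' hS''
      apply hm
      simp only [PAMod, Set.mem_iUnion]
      exact ⟨_, hFmps, hmF⟩
  constructor
  · intro m₁ h₁ m₂ h₂
    rw [hmem m₁ h₁, hmem m₂ h₂]
  · intro m hm
    by_cases hpm : p m = 0
    · exact Or.inl hpm
    · exact Or.inr fun m' hm' => (hmem m' hm') ▸ hout m hpm hm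
end
end

section
/- Linear-complexity marginalization over models: let D be a nonempty finite type of data, c : D → M, and p m = |{d : c d = m}|/|D|. For μ = 1, formulas A, B ⊆ M, and denominator ∑_{d∈D} (1 if c d ∈ B else 0) ≠ 0, the conditional probability can be computed by a sum over data alone: P₁(A | {B}) = (∑_{d∈D} (1 if c d ∈ A ∩ B else 0)) / (∑_{d∈D} (1 if c d ∈ B else 0)). -/
open Classical

noncomputable section

variable {M : Type*}

lemma sum_data_eq {D : Type*} [Fintype D] [Fintype M]
    (c : D → M) (S : Set M) :
    (∑ d : D, if c d ∈ S then (1 : ℝ) else 0) =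
      ∑ m : M, (if m ∈ S then (1 : ℝ) else 0) *
        ((Finset.univ.filter (fun d => c d = m)).card : ℝ) := by
  rw [← Finset.sum_fiberwise Finset.univ c (fun d => if c d ∈ S then (1:ℝ) else 0)]
  refine Finset.sum_congr rfl fun m _ => ?_
  rw [Finset.sum_congr rfl (fun d hd => ?_), Finset.sum_const, nsmul_eq_mul, mul_comm]
  simp only [Finset.mem_filter] at hd
  rw [hd.2]

/-- linear-complexity marginalization over models: the
conditional probability can be computed by a sum over data alone. -/
theorem stmt_19 {D : Type*} [Fintype D] [Nonempty D] [Fintype M] [Nonempty M]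
    (c : D → M) (p : M → ℝ)
    (hpdef : ∀ m, p m =
      ((Finset.univ.filter (fun d => c d = m)).card : ℝ) / (Fintype.card D : ℝ))
    (A B : Set M)
    (hden : (∑ d : D, if c d ∈ B then (1 : ℝ) else 0) ≠ 0) :
    condP p 1 A ({B} : Finset (Set M)) =
      (∑ d : D, if c d ∈ A ∩ B then (1 : ℝ) else 0) /
      (∑ d : D, if c d ∈ B then (1 : ℝ) else 0) := by
  have hN : (Fintype.card D : ℝ) ≠ 0 := by
    exact_mod_cast Fintype.card_ne_zero
  have key : ∀ S : Set M, (∑ m : M, (if m ∈ S then (1:ℝ) else 0) * p m) =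
      (∑ d : D, if c d ∈ S then (1 : ℝ) else 0) / (Fintype.card D : ℝ) := by
    intro S
    rw [sum_data_eq c S, Finset.sum_div]
    refine Finset.sum_congr rfl fun m _ => ?_
    rw [hpdef m, mul_div_assoc]
  have hnum : (∑ m : M, ell 1 A m * ellS 1 ({B} : Finset (Set M)) m * p m) =
      (∑ d : D, if c d ∈ A ∩ B then (1 : ℝ) else 0) / (Fintype.card D : ℝ) := by
    have k' := key (A ∩ B)
    simp only [Set.mem_inter_iff] at k' ⊢
    rw [← k']
    refine Finset.sum_congr rfl fun m _ => ?_
    by_cases hA : m ∈ A <;> by_cases hB : m ∈ B <;>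
      simp [ell, ellS, hA, hB, Set.mem_inter_iff]
  have hden' : (∑ m : M, ellS 1 ({B} : Finset (Set M)) m * p m) =
      (∑ d : D, if c d ∈ B then (1 : ℝ) else 0) / (Fintype.card D : ℝ) := by
    rw [← key B]
    refine Finset.sum_congr rfl fun m _ => ?_
    by_cases hB : m ∈ B <;> simp [ell, ellS, hB]
  rw [condP, hnum, hden', div_div_div_comm, div_self hN, div_one]
end
end
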